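/- arXiv:1209.5180 — 2 statements merged into one kernel-verified Lean document; each statement's English description precedes it below -/
import Mathlib

section
/- Let γ > 0, σ ≥ 0, η ≥ 0 with η² ≤ σ²/(2γ), and let Δ be a nonnegative integrable random variable with E[Δ] = 1/f for some f > 0. If W is a random variable with W ≤ η² e^{-2γΔ} + (σ²/(2γ))(1 - e^{-2γΔ}) almost surely, then E[W] ≤ η² e^{-2γ/f} + (σ²/(2γ))(1 - e^{-2γ/f}). -/
open MeasureTheory

theorem stmt_8 {Ω : Type*} [MeasurableSpace Ω] (μ : Measure Ω) [IsProbabilityMeasure μ]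
    (γ σ η f : ℝ) (hγ : 0 < γ) (hσ : 0 ≤ σ) (hη : 0 ≤ η) (hf : 0 < f)
    (hnoise : η ^ 2 ≤ σ ^ 2 / (2 * γ))
    (Δ : Ω → ℝ) (hmeas : Measurable Δ) (hint : Integrable Δ μ)
    (hnonneg : ∀ᵐ ω ∂μ, 0 ≤ Δ ω) (hmean : ∫ ω, Δ ω ∂μ = 1 / f)
    (W : Ω → ℝ) (hW : Integrable W μ)
    (hbound : ∀ᵐ ω ∂μ, W ω ≤ η ^ 2 * Real.exp (-2 * γ * Δ ω) +
      σ ^ 2 / (2 * γ) * (1 - Real.exp (-2 * γ * Δ ω))) :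
    ∫ ω, W ω ∂μ ≤ η ^ 2 * Real.exp (-2 * γ / f) +
      σ ^ 2 / (2 * γ) * (1 - Real.exp (-2 * γ / f)) := by
  set c : ℝ := σ ^ 2 / (2 * γ) with hc
  set E : Ω → ℝ := fun ω => Real.exp (-2 * γ * Δ ω) with hE
  have hEmeas : Measurable E := (Real.measurable_exp.comp ((measurable_const.mul hmeas)))
  have hEint : Integrable E μ := by
    refine (integrable_const (1 : ℝ)).mono' hEmeas.aestronglyMeasurable ?_
    filter_upwards [hnonneg] with ω hω
    rw [Real.norm_eq_abs, abs_of_pos (Real.exp_pos _)]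
    exact Real.exp_le_one_iff.mpr (by nlinarith)
  -- Jensen via tangent line: exp x ≥ exp a * (x - a + 1)
  have hJ : Real.exp (-2 * γ / f) ≤ ∫ ω, E ω ∂μ := by
    have hptwise : ∀ ω, Real.exp (-2 * γ / f) * ((-2 * γ * Δ ω) - (-2 * γ / f) + 1) ≤ E ω := by
      intro ω
      have h := Real.add_one_le_exp ((-2 * γ * Δ ω) - (-2 * γ / f))
      have := mul_le_mul_of_nonneg_left h (le_of_lt (Real.exp_pos (-2 * γ / f)))
      calc Real.exp (-2 * γ / f) * ((-2 * γ * Δ ω) - (-2 * γ / f) + 1)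
          ≤ Real.exp (-2 * γ / f) * Real.exp ((-2 * γ * Δ ω) - (-2 * γ / f)) := this
        _ = E ω := by rw [← Real.exp_add]; congr 1; ring
    have hintL : Integrable (fun ω => Real.exp (-2 * γ / f) * ((-2 * γ * Δ ω) - (-2 * γ / f) + 1)) μ := by
      apply Integrable.const_mul
      exact ((hint.const_mul _).sub (integrable_const _)).add (integrable_const 1)
    have := integral_mono hintL hEint hptwise
    refine le_trans (le_of_eq ?_) this
    rw [integral_const_mul]
    have hfun : (fun ω => (-2 * γ * Δ ω) - (-2 * γ / f) + 1)
        = fun ω => (-2 * γ) * Δ ω + (2 * γ / f + 1) := by funext ω; ring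
    have : ∫ ω, ((-2 * γ * Δ ω) - (-2 * γ / f) + 1) ∂μ
        = (-2 * γ) * (1 / f) + (2 * γ / f + 1) := by
      rw [hfun, integral_add (hint.const_mul _) (integrable_const _), integral_const_mul, hmean,
        integral_const]
      simp
    rw [this]
    have : (-2 * γ) * (1 / f) + (2 * γ / f + 1) = 1 := by field_simp; ring
    rw [this, mul_one]
  have hg : ∫ ω, W ω ∂μ ≤ ∫ ω, (c + (η ^ 2 - c) * E ω) ∂μ := by
    apply integral_mono_ae hW ((integrable_const c).add (hEint.const_mul _))
    filter_upwards [hbound] with ω hω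
    calc W ω ≤ η ^ 2 * E ω + c * (1 - E ω) := hω
      _ = c + (η ^ 2 - c) * E ω := by ring
  have heval : ∫ ω, (c + (η ^ 2 - c) * E ω) ∂μ = c + (η ^ 2 - c) * ∫ ω, E ω ∂μ := by
    rw [integral_add (integrable_const c) (hEint.const_mul _), integral_const,
      integral_const_mul]
    simp
  have hfin : c + (η ^ 2 - c) * ∫ ω, E ω ∂μ ≤ c + (η ^ 2 - c) * Real.exp (-2 * γ / f) := by
    have h1 : η ^ 2 - c ≤ 0 := by linarith
    nlinarith [hJ]
  calc ∫ ω, W ω ∂μ ≤ c + (η ^ 2 - c) * ∫ ω, E ω ∂μ := heval ▸ hg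
    _ ≤ c + (η ^ 2 - c) * Real.exp (-2 * γ / f) := hfin
    _ = η ^ 2 * Real.exp (-2 * γ / f) + c * (1 - Real.exp (-2 * γ / f)) := by ring
end

section
/- Let A, B₁, …, B_m ∈ ℝ^{n×n} satisfy Aᵀ𝟏 = 0 and Bᵢᵀ𝟏 = 0 for all i, where 𝟏 is the all-ones vector, let S₁,…,S_m ∈ ℝ^{1×n}, c ∈ ℝⁿ, and suppose (k₀, ϱ) ∈ ℝⁿ × ℝ satisfies Aᵀk₀ - (1/4)Σᵢ (Sᵢᵀ + Bᵢᵀk₀)^{.2} = -c + ϱ𝟏 (entrywise square (·)^{.2}). Define k(t) = k₀ + ϱ𝟏(T - t) for t ∈ [0,T]. Then k satisfies the Riccati-type ODE k'(t) = -c - Aᵀk(t) + (1/4)Σᵢ (Sᵢᵀ + Bᵢᵀk(t))^{.2} with k(T) = k₀, and moreover (k(t)ᵀBᵢ + Sᵢ) = (k₀ᵀBᵢ + Sᵢ) for all t and i. -/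
open Matrix

theorem stmt_16 (n m : ℕ) (T : ℝ) (hT : 0 < T)
    (A : Matrix (Fin n) (Fin n) ℝ) (B : Fin m → Matrix (Fin n) (Fin n) ℝ)
    (hA : Aᵀ *ᵥ (fun _ => (1 : ℝ)) = 0)
    (hB : ∀ i, (B i)ᵀ *ᵥ (fun _ => (1 : ℝ)) = 0)
    (S : Fin m → Fin n → ℝ) (c : Fin n → ℝ) (k₀ : Fin n → ℝ) (ϱ : ℝ)
    (heq : Aᵀ *ᵥ k₀ -
        (1 / 4 : ℝ) • ∑ i, (fun j => (S i j + ((B i)ᵀ *ᵥ k₀) j) ^ 2) =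
      -c + ϱ • (fun _ => (1 : ℝ)))
    (k : ℝ → Fin n → ℝ)
    (hk : ∀ t, k t = k₀ + (ϱ * (T - t)) • (fun _ => (1 : ℝ))) :
    (∀ t ∈ Set.Icc (0 : ℝ) T,
      HasDerivAt k
        (-c - Aᵀ *ᵥ k t +
          (1 / 4 : ℝ) • ∑ i, (fun j => (S i j + ((B i)ᵀ *ᵥ k t) j) ^ 2)) t) ∧
    k T = k₀ ∧
    (∀ t, ∀ i, k t ᵥ* B i + S i = k₀ ᵥ* B i + S i) := by
  have hkfun : k = fun t => k₀ + (ϱ * (T - t)) • (fun _ => (1 : ℝ)) := funext hk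
  have hBk : ∀ t i, (B i)ᵀ *ᵥ k t = (B i)ᵀ *ᵥ k₀ := by
    intro t i
    rw [hk t, Matrix.mulVec_add, Matrix.mulVec_smul, hB i, smul_zero, add_zero]
  have hAk : ∀ t, Aᵀ *ᵥ k t = Aᵀ *ᵥ k₀ := by
    intro t
    rw [hk t, Matrix.mulVec_add, Matrix.mulVec_smul, hA, smul_zero, add_zero]
  refine ⟨?_, ?_, ?_⟩
  · intro t _
    have h1 : HasDerivAt (fun t : ℝ => ϱ * (T - t)) (-ϱ) t := by
      simpa using ((hasDerivAt_id t).const_sub T).const_mul ϱ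
    have h2 : HasDerivAt (fun t : ℝ => k₀ + (ϱ * (T - t)) • (fun _ => (1 : ℝ) : Fin n → ℝ))
        ((-ϱ) • (fun _ => (1 : ℝ) : Fin n → ℝ)) t :=
      (h1.smul_const _).const_add k₀
    have hsum : (∑ i, fun j => (S i j + ((B i)ᵀ *ᵥ k t) j) ^ 2)
        = ∑ i, (fun j => (S i j + ((B i)ᵀ *ᵥ k₀) j) ^ 2) := by
      simp only [hBk t]
    have hval : (-c - Aᵀ *ᵥ k t +
        (1 / 4 : ℝ) • ∑ i, (fun j => (S i j + ((B i)ᵀ *ᵥ k t) j) ^ 2))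
        = (-ϱ) • (fun _ => (1 : ℝ) : Fin n → ℝ) := by
      rw [hAk t, hsum, eq_add_of_sub_eq heq]
      module
    rw [hval, hkfun]
    exact h2
  · rw [hk T]; simp
  · intro t i
    have h0 : (((ϱ * (T - t)) • (fun _ => (1 : ℝ)) : Fin n → ℝ)) ᵥ* B i = 0 := by
      rw [← Matrix.mulVec_transpose, Matrix.mulVec_smul, hB i, smul_zero]
    rw [hk t, Matrix.add_vecMul, h0, add_zero]
end
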